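/- arXiv:1504.05176 — 3 statements merged into one kernel-verified Lean document; each statement's English description precedes it below -/
import Mathlib

section
/- For two integer partitions λ and μ, the two sets {ν : μ ≺ ν and ν' ≺ λ'} and {ν : μ' ≺ ν' and ν ≺ λ} are simultaneously nonempty if and only if μ ⊆ λ and the skew shape λ/μ contains no 2×2 square; moreover in that case both sets have the same cardinality 2^C, where C is the number of connected components of λ/μ. -/
open scoped Classical

/-- An integer partition: a nonincreasing sequence of nonnegative integers, eventually zero. -/
structure IntPartition where
  f : ℕ → ℕ
  antitone : ∀ i j : ℕ, i ≤ j → f j ≤ f i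
  eventually_zero : ∃ N : ℕ, ∀ n : ℕ, N ≤ n → f n = 0

/-- `InterF f g` means `f ≻ g`, i.e. `f 0 ≥ g 0 ≥ f 1 ≥ g 1 ≥ ⋯` (0-indexed). -/
def InterF (f g : ℕ → ℕ) : Prop := ∀ i : ℕ, g i ≤ f i ∧ f (i + 1) ≤ g i

/-- `conjF f i` is the `(i+1)`-st part of the conjugate partition: the number of `j` with `f j ≥ i+1`. -/
noncomputable def conjF (f : ℕ → ℕ) (i : ℕ) : ℕ := Set.ncard {j : ℕ | i + 1 ≤ f j}

/-- The size `|f| = Σ f i` of a partition. -/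
noncomputable def sizeF (f : ℕ → ℕ) : ℕ := ∑ᶠ i : ℕ, f i

/-- The empty partition. -/
def emptyP : IntPartition := ⟨fun _ => 0, fun _ _ _ => le_rfl, ⟨0, fun _ _ => rfl⟩⟩

/-- The set of cells (row, column), 0-indexed, of the skew shape `λ/μ`. -/
def skewCells (lam mu : IntPartition) : Set (ℕ × ℕ) :=
  {c : ℕ × ℕ | mu.f c.1 ≤ c.2 ∧ c.2 < lam.f c.1}

/-- Edge-adjacency of cells. -/
def cellAdj (c d : ℕ × ℕ) : Prop :=
  (c.1 = d.1 ∧ (c.2 + 1 = d.2 ∨ d.2 + 1 = c.2)) ∨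
    (c.2 = d.2 ∧ (c.1 + 1 = d.1 ∨ d.1 + 1 = c.1))

/-- The adjacency graph of the cells of the skew shape `λ/μ`. -/
def skewGraph (lam mu : IntPartition) : SimpleGraph (skewCells lam mu) where
  Adj c d := cellAdj c.1 d.1
  symm := ⟨by rintro ⟨c, _⟩ ⟨d, _⟩ h; unfold cellAdj at *; omega⟩
  loopless := ⟨by rintro ⟨c, _⟩ h; unfold cellAdj at h; omega⟩

/-- `λ/μ` contains no 2×2 square. -/
def noTwoByTwo (lam mu : IntPartition) : Prop :=
  ¬ ∃ i j : ℕ, (i, j) ∈ skewCells lam mu ∧ (i, j + 1) ∈ skewCells lam mu ∧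
      (i + 1, j) ∈ skewCells lam mu ∧ (i + 1, j + 1) ∈ skewCells lam mu

/-- The set `{ν : μ ≺ ν and ν' ≺ λ'}`. -/
def S1 (lam mu : IntPartition) : Set IntPartition :=
  {ν : IntPartition | InterF ν.f mu.f ∧ InterF (conjF lam.f) (conjF ν.f)}

/-- The set `{ν : μ' ≺ ν' and ν ≺ λ}`. -/
def S2 (lam mu : IntPartition) : Set IntPartition :=
  {ν : IntPartition | InterF (conjF ν.f) (conjF mu.f) ∧ InterF lam.f ν.f}


/-!
Unwinding conjugation, `ν ∈ S1 λ μ` says exactly that every part `ν i` lies in the interval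
`[max (μ i) (λ i - 1), min (λ i) (μ (i - 1))]` (no upper cap from `μ` when `i = 0`), and
`ν ∈ S2 λ μ` that `ν i ∈ [max (μ i) (λ (i + 1)), min (μ i + 1) (λ i)]`. The rows are thus
constrained independently: all intervals are nonempty exactly when `μ ⊆ λ` and
`λ (i + 1) ≤ μ i + 1`, which is the absence of 2×2 squares, and then each interval has one or two
points. It has two points exactly when row `i` of `λ/μ` is nonempty and shares no column with the
row above (for `S1`), resp. below (for `S2`). The components of `λ/μ` are runs of consecutive rows
in which each row shares a column with the next, so both counts of free rows equal the number of
components.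
-/

open Set

namespace IntPartition

lemma f_injective : Function.Injective IntPartition.f := by
  rintro ⟨f, _, _⟩ ⟨g, _, _⟩ rfl
  rfl

lemma mem_range_f_of_le {f : ℕ → ℕ} (p : IntPartition) (hf : Antitone f) (hle : ∀ i, f i ≤ p.f i) :
    f ∈ range IntPartition.f := by
  obtain ⟨N, hN⟩ := p.eventually_zero
  exact ⟨⟨f, fun _ _ hij => hf hij, N, fun n hn => Nat.eq_zero_of_le_zero (hN n hn ▸ hle n)⟩, rfl⟩

lemma lt_conjF_iff (p : IntPartition) {i j : ℕ} : j < conjF p.f i ↔ i < p.f j := by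
  have hex : ∃ n, p.f n ≤ i := by
    obtain ⟨N, hN⟩ := p.eventually_zero
    exact ⟨N, (hN N le_rfl).trans_le i.zero_le⟩
  have hmem : ∀ j, i < p.f j ↔ j < Nat.find hex := fun j => by
    rw [Nat.lt_find_iff]
    exact ⟨fun h m hm => not_le.2 (h.trans_le (p.antitone m j hm)),
      fun h => not_le.1 (h j le_rfl)⟩
  have hset : {j | i + 1 ≤ p.f j} = Iio (Nat.find hex) := Set.ext hmem
  rw [conjF, hset, ncard_Iio_nat, hmem]

lemma forall_conjF_add_le_iff (p q : IntPartition) (s : ℕ) :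
    (∀ i, conjF p.f (i + s) ≤ conjF q.f i) ↔ ∀ j, p.f j ≤ q.f j + s := by
  simp only [← forall_lt_iff_le, lt_conjF_iff]
  constructor
  · intro h j c hc
    by_cases hcs : c < s
    · omega
    · have := @h (c - s) j (by rwa [Nat.sub_add_cancel (not_lt.1 hcs)])
      omega
  · intro h i j hj
    have := h j hj
    omega

/-- `ν' ≺ λ'` means that `λ/ν` is a vertical strip. -/
lemma interF_conjF_iff (p q : IntPartition) :
    InterF (conjF p.f) (conjF q.f) ↔ ∀ j, q.f j ≤ p.f j ∧ p.f j ≤ q.f j + 1 := by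
  have hle := forall_conjF_add_le_iff q p 0
  simp only [add_zero] at hle
  rw [InterF, forall_and, forall_and, hle, forall_conjF_add_le_iff p q 1]

end IntPartition

open IntPartition

lemma Set.ncard_univ_pi_Icc_of_le_add_one {ι : Type*} {lo hi : ι → ℕ}
    (hle : ∀ i, lo i ≤ hi i) (hle_succ : ∀ i, hi i ≤ lo i + 1) (hfin : {i | lo i < hi i}.Finite) :
    (univ.pi fun i => Icc (lo i) (hi i)).ncard = 2 ^ {i | lo i < hi i}.ncard := by
  rw [← ncard_powerset _ hfin]
  refine ncard_congr (fun f _ => {i | lo i < f i}) ?_ ?_ ?_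
  · intro f hf i hi
    exact hi.trans_le (hf i trivial).2
  · intro f g hf hg hfg
    funext i
    have hfi := hf i trivial
    have hgi := hg i trivial
    have hi := Set.ext_iff.1 hfg i
    simp only [mem_Icc, mem_ofPred_eq] at hfi hgi hi
    have := hle_succ i
    omega
  · intro s hs
    refine ⟨fun i => if i ∈ s then hi i else lo i, fun i _ => ?_, ?_⟩
    · dsimp only
      split_ifs
      exacts [⟨hle i, le_rfl⟩, ⟨le_rfl, hle i⟩]
    · ext i
      by_cases his : i ∈ s
      · simpa [his] using hs his
      · simp [his]

section Components

variable {lam mu : IntPartition}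

lemma finite_setOf_lt (lam mu : IntPartition) : {i | mu.f i < lam.f i}.Finite := by
  obtain ⟨N, hN⟩ := lam.eventually_zero
  refine (finite_Iio N).subset fun i hi => ?_
  by_contra hiN
  have := hN i (not_lt.1 hiN)
  simp only [mem_ofPred_eq] at hi
  omega

lemma noTwoByTwo_iff : noTwoByTwo lam mu ↔ ∀ i, lam.f (i + 1) ≤ mu.f i + 1 := by
  constructor
  · intro h i
    by_contra! hi
    have hmu := mu.antitone i (i + 1) i.le_succ
    have hlam := lam.antitone i (i + 1) i.le_succ
    refine h ⟨i, mu.f i, ?_, ?_, ?_, ?_⟩ <;> simp only [skewCells, mem_ofPred_eq] <;> omega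
  · rintro h ⟨i, j, hij, -, -, hij'⟩
    simp only [skewCells, mem_ofPred_eq] at hij hij'
    have := h i
    omega

/-- Row `i` of `λ/μ` is nonempty and shares no column with row `i - 1`. -/
def IsTopRow (lam mu : IntPartition) (i : ℕ) : Prop :=
  mu.f i < lam.f i ∧ ∀ k, i = k + 1 → lam.f i ≤ mu.f k

/-- Row `i` of `λ/μ` is nonempty and shares no column with row `i + 1`. -/
def IsBottomRow (lam mu : IntPartition) (i : ℕ) : Prop :=
  mu.f i < lam.f i ∧ lam.f (i + 1) ≤ mu.f i

lemma reachable_of_fst_eq {c d : skewCells lam mu} (h : c.1.1 = d.1.1) :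
    (skewGraph lam mu).Reachable c d := by
  obtain ⟨⟨i, j⟩, hc⟩ := c
  obtain ⟨⟨i', j'⟩, hd⟩ := d
  obtain rfl : i = i' := h
  wlog hjj : j ≤ j' generalizing j j'
  · exact (this j' hd j hc (le_of_not_ge hjj)).symm
  induction j', hjj using Nat.le_induction with
  | base => rfl
  | succ m hjm ih =>
    have hm : (i, m) ∈ skewCells lam mu := ⟨hc.1.trans hjm, (Nat.lt_succ_self m).trans hd.2⟩
    exact (ih hm).trans (SimpleGraph.Adj.reachable (Or.inl ⟨rfl, Or.inl rfl⟩))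

lemma reachable_of_fst_eq_succ {k : ℕ} (hk : mu.f k < lam.f (k + 1)) {c d : skewCells lam mu}
    (hc : c.1.1 = k) (hd : d.1.1 = k + 1) : (skewGraph lam mu).Reachable c d := by
  let a : skewCells lam mu := ⟨(k, mu.f k), le_rfl, hk.trans_le (lam.antitone _ _ k.le_succ)⟩
  let b : skewCells lam mu := ⟨(k + 1, mu.f k), mu.antitone _ _ k.le_succ, hk⟩
  have hab : (skewGraph lam mu).Adj a b := Or.inr ⟨rfl, Or.inl rfl⟩
  exact (reachable_of_fst_eq hc).trans (hab.reachable.trans (reachable_of_fst_eq hd.symm))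

lemma fst_le_of_adj {k : ℕ} (hk : lam.f (k + 1) ≤ mu.f k) {c d : skewCells lam mu}
    (h : (skewGraph lam mu).Adj c d) (hc : c.1.1 ≤ k) : d.1.1 ≤ k := by
  obtain ⟨⟨i, j⟩, hij⟩ := c
  obtain ⟨⟨i', j'⟩, hij'⟩ := d
  simp only [skewGraph, cellAdj] at h hc ⊢
  by_contra hlt
  obtain ⟨rfl, rfl, rfl⟩ : i = k ∧ i' = k + 1 ∧ j = j' := by omega
  exact absurd (hij.1.trans_lt hij'.2) (not_lt.2 hk)

lemma fst_le_of_reachable {k : ℕ} (hk : lam.f (k + 1) ≤ mu.f k) {c d : skewCells lam mu}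
    (h : (skewGraph lam mu).Reachable c d) (hc : c.1.1 ≤ k) : d.1.1 ≤ k := by
  obtain ⟨p⟩ := h
  induction p with
  | nil => exact hc
  | cons hadj _ ih => exact ih (fst_le_of_adj hk hadj hc)

lemma exists_reachable_isTopRow (c : skewCells lam mu) :
    ∃ d : skewCells lam mu, IsTopRow lam mu d.1.1 ∧ (skewGraph lam mu).Reachable c d := by
  obtain ⟨⟨i, j⟩, hc⟩ := c
  induction i using Nat.strong_induction_on generalizing j with
  | _ i ih =>
  by_cases htop : IsTopRow lam mu i
  · exact ⟨_, htop, .rfl⟩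
  obtain ⟨k, rfl, hk⟩ : ∃ k, i = k + 1 ∧ mu.f k < lam.f (k + 1) := by
    simp only [IsTopRow, not_and, not_forall, not_le] at htop
    obtain ⟨k, hik, hk⟩ := htop (hc.1.trans_lt hc.2)
    exact ⟨k, hik, hik ▸ hk⟩
  have he : (k, mu.f k) ∈ skewCells lam mu :=
    ⟨le_rfl, hk.trans_le (lam.antitone _ _ k.le_succ)⟩
  obtain ⟨d, hd, hed⟩ := ih k k.lt_succ_self (mu.f k) he
  exact ⟨d, hd, (reachable_of_fst_eq_succ hk rfl rfl).symm.trans hed⟩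

lemma exists_reachable_isBottomRow (c : skewCells lam mu) :
    ∃ d : skewCells lam mu, IsBottomRow lam mu d.1.1 ∧ (skewGraph lam mu).Reachable c d := by
  obtain ⟨N, hN⟩ := lam.eventually_zero
  suffices ∀ n (c : skewCells lam mu), N ≤ c.1.1 + n →
      ∃ d : skewCells lam mu, IsBottomRow lam mu d.1.1 ∧ (skewGraph lam mu).Reachable c d from
    this N c (Nat.le_add_left N _)
  intro n
  induction n with
  | zero =>
    intro c hc
    have := hN _ (by simpa using hc)
    have := c.2.2
    omega
  | succ n ih =>
    rintro ⟨⟨i, j⟩, hc⟩ hn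
    by_cases hbot : lam.f (i + 1) ≤ mu.f i
    · exact ⟨_, ⟨hc.1.trans_lt hc.2, hbot⟩, .rfl⟩
    have hi : mu.f i < lam.f (i + 1) := not_le.1 hbot
    obtain ⟨d, hd, hed⟩ :=
      ih ⟨(i + 1, mu.f i), mu.antitone _ _ i.le_succ, hi⟩ (by simp only at hn ⊢; omega)
    exact ⟨d, hd, (reachable_of_fst_eq_succ hi rfl rfl).trans hed⟩

lemma card_connectedComponent_eq_ncard {R : Set ℕ} (hR : ∀ r ∈ R, mu.f r < lam.f r)
    (hreach : ∀ c, ∃ d : skewCells lam mu, d.1.1 ∈ R ∧ (skewGraph lam mu).Reachable c d)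
    (hsep : ∀ u ∈ R, ∀ v ∈ R, u < v → ∃ k, u ≤ k ∧ k < v ∧ lam.f (k + 1) ≤ mu.f k) :
    Nat.card (skewGraph lam mu).ConnectedComponent = R.ncard := by
  let cell (r : R) : skewCells lam mu := ⟨(r, mu.f r), le_rfl, hR r r.2⟩
  have hsep' : ∀ u v : R, u.1 < v.1 → ¬ (skewGraph lam mu).Reachable (cell u) (cell v) := by
    intro u v huv h
    obtain ⟨k, huk, hkv, hk⟩ := hsep u u.2 v v.2 huv
    exact absurd (fst_le_of_reachable hk h huk) (not_le.2 hkv)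
  rw [← Nat.card_coe_set_eq]
  refine (Nat.card_congr (Equiv.ofBijective (fun r => (skewGraph lam mu).connectedComponentMk
    (cell r)) ⟨fun u v huv => ?_, fun C => ?_⟩)).symm
  · have h := SimpleGraph.ConnectedComponent.eq.1 huv
    rcases lt_trichotomy u.1 v.1 with h' | h' | h'
    · exact absurd h (hsep' u v h')
    · exact Subtype.ext h'
    · exact absurd h.symm (hsep' v u h')
  · obtain ⟨c, rfl⟩ := C.exists_rep
    obtain ⟨d, hd, hcd⟩ := hreach c
    have hdr : (skewGraph lam mu).Reachable d (cell ⟨_, hd⟩) := reachable_of_fst_eq rfl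
    exact ⟨⟨_, hd⟩, SimpleGraph.ConnectedComponent.eq.2 (hcd.trans hdr).symm⟩

lemma card_connectedComponent_eq_ncard_isTopRow :
    Nat.card (skewGraph lam mu).ConnectedComponent = {i | IsTopRow lam mu i}.ncard := by
  refine card_connectedComponent_eq_ncard (fun _ h => h.1) exists_reachable_isTopRow ?_
  intro u _ v hv huv
  obtain ⟨k, rfl⟩ := Nat.exists_eq_add_of_lt huv
  exact ⟨u + k, by omega, by omega, hv.2 _ rfl⟩

lemma card_connectedComponent_eq_ncard_isBottomRow :
    Nat.card (skewGraph lam mu).ConnectedComponent = {i | IsBottomRow lam mu i}.ncard :=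
  card_connectedComponent_eq_ncard (fun _ h => h.1) exists_reachable_isBottomRow
    fun u hu _ _ huv => ⟨u, le_rfl, huv, hu.2⟩

end Components

section S1

variable {lam mu : IntPartition}

def lowerS1 (lam mu : IntPartition) (i : ℕ) : ℕ := max (mu.f i) (lam.f i - 1)

def upperS1 (lam mu : IntPartition) : ℕ → ℕ
  | 0 => lam.f 0
  | i + 1 => min (lam.f (i + 1)) (mu.f i)

lemma S1_eq_preimage :
    S1 lam mu = IntPartition.f ⁻¹' univ.pi fun i => Icc (lowerS1 lam mu i) (upperS1 lam mu i) := by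
  ext ν
  simp only [S1, mem_ofPred_eq]
  rw [interF_conjF_iff]
  simp only [InterF, mem_preimage, mem_univ_pi, mem_Icc, lowerS1, max_le_iff, ← forall_and]
  constructor
  · rintro h (_ | i)
    · have := h 0
      simp only [upperS1]
      omega
    · have := h i
      have := h (i + 1)
      simp only [upperS1, le_min_iff]
      omega
  · intro h i
    have := h i
    have := h (i + 1)
    cases i <;> simp only [upperS1, le_min_iff] at * <;> omega

lemma pi_Icc_S1_subset_range :
    (univ.pi fun i => Icc (lowerS1 lam mu i) (upperS1 lam mu i)) ⊆ range IntPartition.f := by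
  intro f hf
  simp only [mem_univ_pi, mem_Icc, lowerS1, max_le_iff] at hf
  refine mem_range_f_of_le lam (antitone_nat_of_succ_le fun i => ?_) fun i => ?_
  · have := hf i
    have := (hf (i + 1)).2
    simp only [upperS1, le_min_iff] at this
    omega
  · have := (hf i).2
    cases i <;> simp only [upperS1, le_min_iff] at this <;> omega

lemma lowerS1_le_upperS1 (hsub : ∀ i, mu.f i ≤ lam.f i) (hstep : ∀ i, lam.f (i + 1) ≤ mu.f i + 1)
    (i : ℕ) : lowerS1 lam mu i ≤ upperS1 lam mu i := by
  have := hsub i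
  cases i with
  | zero => simp only [lowerS1, upperS1]; omega
  | succ k =>
    have := hstep k
    have := mu.antitone k (k + 1) k.le_succ
    simp only [lowerS1, upperS1]
    omega

lemma upperS1_le_lowerS1_add_one (i : ℕ) : upperS1 lam mu i ≤ lowerS1 lam mu i + 1 := by
  cases i <;> simp only [lowerS1, upperS1] <;> omega

lemma setOf_lowerS1_lt_upperS1 :
    {i | lowerS1 lam mu i < upperS1 lam mu i} = {i | IsTopRow lam mu i} := by
  ext (_ | i) <;> simp [lowerS1, upperS1, IsTopRow] <;> omega

lemma ncard_S1 (hsub : ∀ i, mu.f i ≤ lam.f i) (hstep : ∀ i, lam.f (i + 1) ≤ mu.f i + 1) :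
    (S1 lam mu).ncard = 2 ^ {i | IsTopRow lam mu i}.ncard := by
  have hfin : {i | lowerS1 lam mu i < upperS1 lam mu i}.Finite := by
    rw [setOf_lowerS1_lt_upperS1]
    exact (finite_setOf_lt lam mu).subset fun _ h => h.1
  rw [S1_eq_preimage, ncard_preimage_of_injective_subset_range f_injective pi_Icc_S1_subset_range,
    ncard_univ_pi_Icc_of_le_add_one (lowerS1_le_upperS1 hsub hstep) upperS1_le_lowerS1_add_one
      hfin, setOf_lowerS1_lt_upperS1]

lemma S1_nonempty (hsub : ∀ i, mu.f i ≤ lam.f i) (hstep : ∀ i, lam.f (i + 1) ≤ mu.f i + 1) :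
    (S1 lam mu).Nonempty := by
  rw [S1_eq_preimage]
  exact Nonempty.preimage' ⟨_, fun i _ => ⟨le_rfl, lowerS1_le_upperS1 hsub hstep i⟩⟩
    pi_Icc_S1_subset_range

end S1

section S2

variable {lam mu : IntPartition}

def lowerS2 (lam mu : IntPartition) (i : ℕ) : ℕ := max (mu.f i) (lam.f (i + 1))

def upperS2 (lam mu : IntPartition) (i : ℕ) : ℕ := min (mu.f i + 1) (lam.f i)

lemma S2_eq_preimage :
    S2 lam mu = IntPartition.f ⁻¹' univ.pi fun i => Icc (lowerS2 lam mu i) (upperS2 lam mu i) := by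
  ext ν
  simp only [S2, mem_ofPred_eq]
  rw [interF_conjF_iff]
  simp only [InterF, mem_preimage, mem_univ_pi, mem_Icc, lowerS2, upperS2, max_le_iff,
    le_min_iff, ← forall_and]
  exact forall_congr' fun i => by omega

lemma pi_Icc_S2_subset_range :
    (univ.pi fun i => Icc (lowerS2 lam mu i) (upperS2 lam mu i)) ⊆ range IntPartition.f := by
  intro f hf
  simp only [mem_univ_pi, mem_Icc, lowerS2, upperS2, max_le_iff, le_min_iff] at hf
  refine mem_range_f_of_le lam (antitone_nat_of_succ_le fun i => ?_) fun i => (hf i).2.2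
  have := hf i
  have := hf (i + 1)
  omega

lemma lowerS2_le_upperS2 (hsub : ∀ i, mu.f i ≤ lam.f i) (hstep : ∀ i, lam.f (i + 1) ≤ mu.f i + 1)
    (i : ℕ) : lowerS2 lam mu i ≤ upperS2 lam mu i := by
  have := hsub i
  have := hstep i
  have := lam.antitone i (i + 1) i.le_succ
  simp only [lowerS2, upperS2]
  omega

lemma upperS2_le_lowerS2_add_one (i : ℕ) : upperS2 lam mu i ≤ lowerS2 lam mu i + 1 := by
  simp only [lowerS2, upperS2]
  omega

lemma setOf_lowerS2_lt_upperS2 :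
    {i | lowerS2 lam mu i < upperS2 lam mu i} = {i | IsBottomRow lam mu i} := by
  ext i
  simp only [mem_ofPred_eq, lowerS2, upperS2, IsBottomRow]
  omega

lemma ncard_S2 (hsub : ∀ i, mu.f i ≤ lam.f i) (hstep : ∀ i, lam.f (i + 1) ≤ mu.f i + 1) :
    (S2 lam mu).ncard = 2 ^ {i | IsBottomRow lam mu i}.ncard := by
  have hfin : {i | lowerS2 lam mu i < upperS2 lam mu i}.Finite := by
    rw [setOf_lowerS2_lt_upperS2]
    exact (finite_setOf_lt lam mu).subset fun _ h => h.1
  rw [S2_eq_preimage, ncard_preimage_of_injective_subset_range f_injective pi_Icc_S2_subset_range,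
    ncard_univ_pi_Icc_of_le_add_one (lowerS2_le_upperS2 hsub hstep) upperS2_le_lowerS2_add_one
      hfin, setOf_lowerS2_lt_upperS2]

lemma S2_nonempty (hsub : ∀ i, mu.f i ≤ lam.f i) (hstep : ∀ i, lam.f (i + 1) ≤ mu.f i + 1) :
    (S2 lam mu).Nonempty := by
  rw [S2_eq_preimage]
  exact Nonempty.preimage' ⟨_, fun i _ => ⟨le_rfl, lowerS2_le_upperS2 hsub hstep i⟩⟩
    pi_Icc_S2_subset_range

end S2

lemma le_and_noTwoByTwo_of_mem_S1 {lam mu ν : IntPartition} (hν : ν ∈ S1 lam mu) :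
    (∀ i, mu.f i ≤ lam.f i) ∧ noTwoByTwo lam mu := by
  rw [S1_eq_preimage] at hν
  simp only [mem_preimage, mem_univ_pi, mem_Icc, lowerS1, max_le_iff] at hν
  refine ⟨fun i => ?_, noTwoByTwo_iff.2 fun i => ?_⟩
  · have := hν i
    cases i <;> simp only [upperS1, le_min_iff] at this <;> omega
  · have := hν (i + 1)
    simp only [upperS1, le_min_iff] at this
    omega

/-- the two sets `{ν : μ ≺ ν, ν' ≺ λ'}` and `{ν : μ' ≺ ν', ν ≺ λ}` are
simultaneously nonempty iff `μ ⊆ λ` and `λ/μ` contains no 2×2 square; in that case both have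
cardinality `2^C`, where `C` is the number of connected components of `λ/μ`. -/
theorem stmt1 (lam mu : IntPartition) :
    (((S1 lam mu).Nonempty ∧ (S2 lam mu).Nonempty) ↔
      ((∀ i, mu.f i ≤ lam.f i) ∧ noTwoByTwo lam mu)) ∧
    (((∀ i, mu.f i ≤ lam.f i) ∧ noTwoByTwo lam mu) →
      (S1 lam mu).ncard = 2 ^ Nat.card (skewGraph lam mu).ConnectedComponent ∧
      (S2 lam mu).ncard = 2 ^ Nat.card (skewGraph lam mu).ConnectedComponent) := by
  refine ⟨⟨fun ⟨⟨_, hν⟩, _⟩ => le_and_noTwoByTwo_of_mem_S1 hν, fun ⟨hsub, hno⟩ => ?_⟩, ?_⟩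
  · have hstep := noTwoByTwo_iff.1 hno
    exact ⟨S1_nonempty hsub hstep, S2_nonempty hsub hstep⟩
  · rintro ⟨hsub, hno⟩
    have hstep := noTwoByTwo_iff.1 hno
    rw [ncard_S1 hsub hstep, ncard_S2 hsub hstep, ← card_connectedComponent_eq_ncard_isTopRow,
      ← card_connectedComponent_eq_ncard_isBottomRow]
    exact ⟨rfl, rfl⟩
end

section
/- Under the involution ω of the fermionic Fock space sending a Maya diagram (equivalently charged partition (λ,c)) to its conjugate (λ',-c), one has ω ψ*_k ω = (-1)^{C+k+1/2} ψ_{-k} for every k ∈ ℤ+1/2, where C is the charge operator acting on Maya diagrams of charge c as multiplication by c. -/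
open scoped Classical

/-- A Maya diagram: a two-coloring of `ℤ + 1/2` (the integer `n` encodes the position `n + 1/2`;
`true` = black marble, `false` = white marble), eventually black to the left and
eventually white to the right. -/
structure Maya where
  f : ℤ → Bool
  black_small : ∃ N : ℤ, ∀ n : ℤ, n < N → f n = true
  white_large : ∃ N : ℤ, ∀ n : ℤ, N < n → f n = false

/-- The charge of a Maya diagram:
`#{k > 0 : m k = black} - #{k < 0 : m k = white}` (positions `k = n + 1/2`). -/
noncomputable def Maya.charge (m : Maya) : ℤ :=
  (Set.ncard {n : ℤ | 0 ≤ n ∧ m.f n = true} : ℤ) -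
    (Set.ncard {n : ℤ | n < 0 ∧ m.f n = false} : ℤ)

/-- The fermionic Fock space: formal linear combinations of Maya diagrams. -/
abbrev Fock := Maya →₀ ℂ

/-- Flip the marble of `m` at site `k`. -/
def Maya.flip (m : Maya) (k : ℤ) : Maya where
  f := Function.update m.f k (!(m.f k))
  black_small := by
    obtain ⟨N, hN⟩ := m.black_small
    refine ⟨min N k, fun n hn => ?_⟩
    rw [Function.update_of_ne (by omega)]
    exact hN n (by omega)
  white_large := by
    obtain ⟨N, hN⟩ := m.white_large
    refine ⟨max N k, fun n hn => ?_⟩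
    rw [Function.update_of_ne (by omega)]
    exact hN n (by omega)

/-- The number of black marbles of `m` strictly above site `k`. -/
noncomputable def nAbove (m : Maya) (k : ℤ) : ℕ := Set.ncard {j : ℤ | k < j ∧ m.f j = true}

open scoped Classical in
/-- The fermionic operator `ψ_k` (here `k : ℤ` encodes the position `k + 1/2`). -/
noncomputable def psi (k : ℤ) : Fock →ₗ[ℂ] Fock :=
  Finsupp.lsum ℂ fun m => LinearMap.toSpanSingleton ℂ Fock
    (if m.f k = false then ((-1 : ℂ) ^ nAbove m k) • Finsupp.single (m.flip k) (1 : ℂ) else 0)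

open scoped Classical in
/-- The fermionic operator `ψ*_k`. -/
noncomputable def psiStar (k : ℤ) : Fock →ₗ[ℂ] Fock :=
  Finsupp.lsum ℂ fun m => LinearMap.toSpanSingleton ℂ Fock
    (if m.f k = true then ((-1 : ℂ) ^ nAbove m k) • Finsupp.single (m.flip k) (1 : ℂ) else 0)

/-- The conjugate Maya diagram `m'`, with `{m(k), m'(-k)} = {black, white}`:
in the integer encoding of positions, `m'.f n = !(m.f (-n - 1))`. -/
def Maya.conj (m : Maya) : Maya where
  f n := !(m.f (-n - 1))
  black_small := by
    obtain ⟨N, hN⟩ := m.white_large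
    exact ⟨-N - 1, fun n hn => by simp [hN (-n - 1) (by omega)]⟩
  white_large := by
    obtain ⟨N, hN⟩ := m.black_small
    exact ⟨-N, fun n hn => by simp [hN (-n - 1) (by omega)]⟩

/-- The involution `ω` of the Fock space sending a Maya diagram (equivalently, a charged
partition `(λ, c)`) to its conjugate (corresponding to `(λ', -c)`). -/
noncomputable def omegaOp : Fock →ₗ[ℂ] Fock := Finsupp.lmapDomain ℂ ℂ Maya.conj

/-!
Conjugation `m ↦ m'` reflects the sites by `j ↦ -j - 1` and swaps colours, so the black marbles of
`m'` above site `n` correspond to the white marbles of `m` below site `-n - 1`: up to the flip of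
that one site, `ω ψ*_n ω` acts on `m` as `ψ_{-n-1}` with sign `(-1)^(#white of m below -n-1)`.
The number of black marbles above a white site `k` minus the number of white marbles below it is
`charge - k`: indeed `nAbove m k - nBelow m (k + 1) + k` does not depend on `k`, and at `k = -1`
it is `charge - 1` by the definition of the charge. This turns the sign into
`(-1)^(charge + n + 1)` times the sign of `ψ_{-n-1}`.
-/

namespace Maya

@[ext]
lemma ext_f {m₁ m₂ : Maya} (h : m₁.f = m₂.f) : m₁ = m₂ := by
  cases m₁; cases m₂; simpa using h

@[simp]
lemma conj_f (m : Maya) (n : ℤ) : m.conj.f n = !(m.f (-n - 1)) := rfl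

@[simp]
lemma flip_f (m : Maya) (k : ℤ) : (m.flip k).f = Function.update m.f k (!(m.f k)) := rfl

lemma conj_flip_conj (m : Maya) (n : ℤ) : (m.conj.flip n).conj = m.flip (-n - 1) := by
  ext j
  by_cases hj : j = -n - 1
  · subst hj; simp
  · simp [Function.update_of_ne hj, Function.update_of_ne (show -j - 1 ≠ n by omega)]

lemma finite_black_above (m : Maya) (k : ℤ) : {j : ℤ | k < j ∧ m.f j = true}.Finite := by
  obtain ⟨N, hN⟩ := m.white_large
  refine (Set.finite_Ioc k N).subset fun j ⟨hkj, hj⟩ => ⟨hkj, ?_⟩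
  by_contra! hNj
  simp [hN j hNj] at hj

lemma finite_white_below (m : Maya) (k : ℤ) : {j : ℤ | j < k ∧ m.f j = false}.Finite := by
  obtain ⟨N, hN⟩ := m.black_small
  refine (Set.finite_Ico N k).subset fun j ⟨hjk, hj⟩ => ⟨?_, hjk⟩
  by_contra! hjN
  simp [hN j hjN] at hj

end Maya

noncomputable def nBelow (m : Maya) (k : ℤ) : ℕ := Set.ncard {j : ℤ | j < k ∧ m.f j = false}

lemma ncard_gt_and_eq (p : ℤ → Prop) [DecidablePred p] (k : ℤ)
    (hfin : {j : ℤ | k + 1 < j ∧ p j}.Finite) :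
    {j : ℤ | k < j ∧ p j}.ncard = {j : ℤ | k + 1 < j ∧ p j}.ncard + if p (k + 1) then 1 else 0 := by
  by_cases h : p (k + 1)
  · rw [if_pos h, ← Set.ncard_insert_of_notMem (fun hk => lt_irrefl _ hk.1) hfin]
    congr 1; ext j; grind
  · rw [if_neg h, add_zero]
    congr 1; ext j; grind

lemma ncard_lt_and_eq (p : ℤ → Prop) [DecidablePred p] (k : ℤ)
    (hfin : {j : ℤ | j < k ∧ p j}.Finite) :
    {j : ℤ | j < k + 1 ∧ p j}.ncard = {j : ℤ | j < k ∧ p j}.ncard + if p k then 1 else 0 := by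
  by_cases h : p k
  · rw [if_pos h, ← Set.ncard_insert_of_notMem (fun hk => lt_irrefl _ hk.1) hfin]
    congr 1; ext j; grind
  · rw [if_neg h, add_zero]
    congr 1; ext j; grind

lemma nAbove_eq_nAbove_add_one_add_ite (m : Maya) (k : ℤ) :
    nAbove m k = nAbove m (k + 1) + if m.f (k + 1) = true then 1 else 0 :=
  ncard_gt_and_eq _ k (m.finite_black_above _)

lemma nBelow_add_one_eq_add_ite (m : Maya) (k : ℤ) :
    nBelow m (k + 1) = nBelow m k + if m.f k = false then 1 else 0 :=
  ncard_lt_and_eq _ k (m.finite_white_below _)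

lemma nAbove_conj (m : Maya) (n : ℤ) : nAbove m.conj n = nBelow m (-n - 1) := by
  have : {j : ℤ | j < -n - 1 ∧ m.f j = false} =
      (fun j : ℤ => -j - 1) '' {j : ℤ | n < j ∧ m.conj.f j = true} := by
    ext i
    simp only [Set.mem_ofPred_eq, Set.mem_image, Maya.conj_f, Bool.not_eq_true']
    exact ⟨fun ⟨hi, hfi⟩ => ⟨-i - 1, ⟨by omega, by simpa using hfi⟩, by ring⟩,
      fun ⟨j, ⟨hj, hfj⟩, hij⟩ => by subst hij; exact ⟨by omega, hfj⟩⟩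
  rw [nBelow, this, Set.ncard_image_of_injective _ fun a b h => by omega, nAbove]

lemma nAbove_sub_nBelow_add_self_eq_succ (m : Maya) (k : ℤ) :
    (nAbove m k : ℤ) - nBelow m (k + 1) + k =
      nAbove m (k + 1) - nBelow m (k + 1 + 1) + (k + 1) := by
  rw [nAbove_eq_nAbove_add_one_add_ite m k, nBelow_add_one_eq_add_ite m (k + 1)]
  cases m.f (k + 1) <;> simp <;> ring

lemma Maya.charge_eq_nAbove_sub_nBelow (m : Maya) (k : ℤ) :
    m.charge = nAbove m k - nBelow m (k + 1) + k + 1 := by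
  induction k using Int.inductionOn' (b := -1) with
  | zero =>
    have hpos : {j : ℤ | 0 ≤ j ∧ m.f j = true} = {j | -1 < j ∧ m.f j = true} := by ext; grind
    rw [Maya.charge, nAbove, nBelow, hpos]
    norm_num
  | succ k _ ih => rw [ih, nAbove_sub_nBelow_add_self_eq_succ]
  | pred k _ ih =>
    have step := nAbove_sub_nBelow_add_self_eq_succ m (k - 1)
    rw [sub_add_cancel] at step
    rw [ih, sub_add_cancel]
    linarith

lemma nAbove_eq_charge_sub_add_nBelow {m : Maya} {k : ℤ} (hk : m.f k = false) :
    (nAbove m k : ℤ) = m.charge - k + nBelow m k := by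
  have hcharge := m.charge_eq_nAbove_sub_nBelow k
  rw [nBelow_add_one_eq_add_ite, if_pos hk] at hcharge
  push_cast at hcharge
  linarith

lemma neg_one_pow_eq_of_cast_eq_add {R : Type*} [DivisionRing R] {a b : ℕ} {c : ℤ}
    (h : (a : ℤ) = c + b) : (-1 : R) ^ b = (-1) ^ c * (-1) ^ a := by
  have hne : (-1 : R) ≠ 0 := neg_ne_zero.2 one_ne_zero
  rw [← zpow_natCast, ← zpow_natCast, h, zpow_add₀ hne, ← mul_assoc, ← zpow_add₀ hne,
    (Even.add_self c).neg_one_zpow, one_mul]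

lemma psiStar_single (k : ℤ) (m : Maya) :
    psiStar k (Finsupp.single m 1) =
      if m.f k = true then ((-1 : ℂ) ^ nAbove m k) • Finsupp.single (m.flip k) 1 else 0 := by
  simp [psiStar]

lemma psi_single (k : ℤ) (m : Maya) :
    psi k (Finsupp.single m 1) =
      if m.f k = false then ((-1 : ℂ) ^ nAbove m k) • Finsupp.single (m.flip k) 1 else 0 := by
  simp [psi]

lemma omegaOp_single (m : Maya) (a : ℂ) :
    omegaOp (Finsupp.single m a) = Finsupp.single m.conj a := by
  simp [omegaOp]

/-- `ω ψ*_k ω = (-1)^(C + k + 1/2) ψ_{-k}`, where `C` is the charge operator;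
in the integer encoding `k = n + 1/2`, the exponent is `charge + n + 1` and `-k` is encoded by
`-n - 1`.  (Stated on each basis vector, on which the charge operator acts by the charge.) -/
theorem stmt7 (n : ℤ) (m : Maya) :
    (omegaOp ∘ₗ psiStar n ∘ₗ omegaOp) (Finsupp.single m 1) =
      ((-1 : ℂ) ^ (m.charge + n + 1)) • (psi (-n - 1)) (Finsupp.single m 1) := by
  rw [LinearMap.comp_apply, LinearMap.comp_apply, omegaOp_single, psiStar_single, psi_single,
    Maya.conj_f]
  cases h : m.f (-n - 1)
  · have hsign : (nAbove m (-n - 1) : ℤ) = (m.charge + n + 1) + nBelow m (-n - 1) := by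
      rw [nAbove_eq_charge_sub_add_nBelow h]; ring
    rw [Bool.not_false, if_pos rfl, if_pos rfl, map_smul, omegaOp_single, Maya.conj_flip_conj,
      nAbove_conj, smul_smul, ← neg_one_pow_eq_of_cast_eq_add hsign]
  · simp
end

section
/- If a 2s×2s antisymmetric matrix A has A_{ij} = 0 whenever i and j have the same parity, then its Pfaffian equals the determinant of the s×s matrix B with B_{tu} = A_{2t-1, 2u}: Pf(A) = det(B). -/
open scoped Classical
open Matrix

open scoped Classical in
/-- Perfect pairings of `{0, …, 2s-1}` in canonical form, viewed as permutations `σ`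
with `σ(2t) < σ(2t+1)` for all `t` and `σ(0) < σ(2) < ⋯ < σ(2s-2)`. -/
noncomputable def pairings (s : ℕ) : Finset (Equiv.Perm (Fin (2 * s))) :=
  Finset.univ.filter fun σ =>
    (∀ t : Fin s, σ ⟨2 * t.1, by have := t.2; omega⟩ < σ ⟨2 * t.1 + 1, by have := t.2; omega⟩) ∧
      ∀ t u : Fin s, t < u →
        σ ⟨2 * t.1, by have := t.2; omega⟩ < σ ⟨2 * u.1, by have := u.2; omega⟩

/-- The Pfaffian of a `2s × 2s` matrix, as the sum over perfect pairings. -/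
noncomputable def pf {R : Type*} [CommRing R] (s : ℕ)
    (A : Matrix (Fin (2 * s)) (Fin (2 * s)) R) : R :=
  ∑ σ ∈ pairings s, (((Equiv.Perm.sign σ : ℤˣ) : ℤ) : R) *
    ∏ t : Fin s, A (σ ⟨2 * t.1, by have := t.2; omega⟩) (σ ⟨2 * t.1 + 1, by have := t.2; omega⟩)


/-!
Under the parity hypothesis only pairings that match every even index with an odd one
contribute, and these are the pairings `{2t, 2π(t)+1}` for `π` a permutation of `Fin s`.
For antisymmetric `A` the summand `sign σ * ∏ A (σ (2t)) (σ (2t+1))` depends only on the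
pairing, not on the order of the pairs or of the two points within a pair, so it can be
evaluated on the representative `2t ↦ 2t, 2t+1 ↦ 2π(t)+1`, where it is
`sign π * ∏ A (2t) (2π(t)+1)`, the summand of `det B` at `π`. The canonical form of a pairing
is unique: its first points are, in increasing order, the points smaller than their partner.
-/

namespace Pfaffian

open Equiv Equiv.Perm

variable {s : ℕ} {R : Type*} [CommRing R]

def slot : Fin s × Fin 2 ≃ Fin (2 * s) where
  toFun p := ⟨2 * p.1 + p.2, by omega⟩
  invFun x := (⟨x / 2, by omega⟩, ⟨x % 2, by omega⟩)
  left_inv := by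
    rintro ⟨t, i⟩
    ext <;> simp only <;> omega
  right_inv := by
    rintro ⟨x, hx⟩
    ext
    simp only
    omega

def evenPos (t : Fin s) : Fin (2 * s) := slot (t, 0)

def oddPos (t : Fin s) : Fin (2 * s) := slot (t, 1)

@[simp] lemma val_evenPos (t : Fin s) : (evenPos t).val = 2 * t := rfl

@[simp] lemma val_oddPos (t : Fin s) : (oddPos t).val = 2 * t + 1 := rfl

lemma evenPos_injective : Function.Injective (evenPos (s := s)) := by
  intro t u h
  ext
  simpa using congrArg Fin.val h

lemma oddPos_injective : Function.Injective (oddPos (s := s)) := by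
  intro t u h
  ext
  simpa using congrArg Fin.val h

lemma evenPos_ne_oddPos (t u : Fin s) : evenPos t ≠ oddPos u := by
  intro h
  have := congrArg Fin.val h
  simp only [val_evenPos, val_oddPos] at this
  omega

lemma exists_eq_evenPos_or_oddPos (x : Fin (2 * s)) :
    (∃ t, x = evenPos t) ∨ ∃ t, x = oddPos t := by
  obtain ⟨⟨t, i⟩, rfl⟩ := slot.surjective x
  fin_cases i
  exacts [Or.inl ⟨t, rfl⟩, Or.inr ⟨t, rfl⟩]

noncomputable def pairingTerm (A : Matrix (Fin (2 * s)) (Fin (2 * s)) R)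
    (σ : Perm (Fin (2 * s))) : R :=
  ((sign σ : ℤ) : R) * ∏ t, A (σ (evenPos t)) (σ (oddPos t))

lemma pf_eq_sum_pairingTerm (A : Matrix (Fin (2 * s)) (Fin (2 * s)) R) :
    pf s A = ∑ σ ∈ pairings s, pairingTerm A σ := rfl

lemma mem_pairings {σ : Perm (Fin (2 * s))} :
    σ ∈ pairings s ↔ (∀ t, σ (evenPos t) < σ (oddPos t)) ∧ StrictMono (σ ∘ evenPos) := by
  simp only [pairings, Finset.mem_filter, Finset.mem_univ, true_and]
  rfl

lemma perm_fin_two_eq_one_or_swap (e : Perm (Fin 2)) : e = 1 ∨ e = swap 0 1 := by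
  revert e
  decide

def permutePairs (g : Perm (Fin s)) : Perm (Fin (2 * s)) :=
  slot.permCongr (prodCongrLeft fun _ => g)

def swapWithinPairs (d : Fin s → Perm (Fin 2)) : Perm (Fin (2 * s)) :=
  slot.permCongr (prodCongrRight d)

@[simp] lemma permutePairs_slot (g : Perm (Fin s)) (t : Fin s) (i : Fin 2) :
    permutePairs g (slot (t, i)) = slot (g t, i) := by
  simp [permutePairs, permCongr_apply]

@[simp] lemma swapWithinPairs_slot (d : Fin s → Perm (Fin 2)) (t : Fin s) (i : Fin 2) :
    swapWithinPairs d (slot (t, i)) = slot (t, d t i) := by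
  simp [swapWithinPairs, permCongr_apply]

lemma permutePairs_evenPos (g : Perm (Fin s)) (t : Fin s) :
    permutePairs g (evenPos t) = evenPos (g t) :=
  permutePairs_slot g t 0

lemma permutePairs_oddPos (g : Perm (Fin s)) (t : Fin s) :
    permutePairs g (oddPos t) = oddPos (g t) :=
  permutePairs_slot g t 1

def flipPairs : Perm (Fin (2 * s)) := swapWithinPairs fun _ => swap 0 1

def partner (σ : Perm (Fin (2 * s))) : Perm (Fin (2 * s)) := σ * flipPairs * σ⁻¹

lemma partner_apply_evenPos (σ : Perm (Fin (2 * s))) (t : Fin s) :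
    partner σ (σ (evenPos t)) = σ (oddPos t) := by
  simp [partner, flipPairs, evenPos, oddPos]

lemma partner_apply_oddPos (σ : Perm (Fin (2 * s))) (t : Fin s) :
    partner σ (σ (oddPos t)) = σ (evenPos t) := by
  simp [partner, flipPairs, evenPos, oddPos]

lemma partner_partner (σ : Perm (Fin (2 * s))) (x : Fin (2 * s)) :
    partner σ (partner σ x) = x := by
  obtain ⟨y, rfl⟩ := σ.surjective x
  obtain ⟨t, rfl⟩ | ⟨t, rfl⟩ := exists_eq_evenPos_or_oddPos y
  · rw [partner_apply_evenPos, partner_apply_oddPos]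
  · rw [partner_apply_oddPos, partner_apply_evenPos]

lemma partner_mul_of_commute {σ τ : Perm (Fin (2 * s))} (h : Commute τ flipPairs) :
    partner (σ * τ) = partner σ := by
  rw [partner, partner, _root_.mul_inv_rev, mul_assoc σ τ, h.eq]
  group

lemma commute_permutePairs_flipPairs (g : Perm (Fin s)) :
    Commute (permutePairs g) flipPairs := by
  ext x
  obtain ⟨⟨t, i⟩, rfl⟩ := slot.surjective x
  simp [flipPairs]

lemma commute_swapWithinPairs_flipPairs (d : Fin s → Perm (Fin 2)) :
    Commute (swapWithinPairs d) flipPairs := by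
  ext x
  obtain ⟨⟨t, i⟩, rfl⟩ := slot.surjective x
  rcases perm_fin_two_eq_one_or_swap (d t) with h | h <;> simp [flipPairs, h]

lemma pairingTerm_mul_permutePairs (A : Matrix (Fin (2 * s)) (Fin (2 * s)) R)
    (σ : Perm (Fin (2 * s))) (g : Perm (Fin s)) :
    pairingTerm A (σ * permutePairs g) = pairingTerm A σ := by
  have hsign : sign (permutePairs g) = 1 := by
    rw [permutePairs, sign_permCongr, sign_prodCongrLeft, Fin.prod_univ_two,
      Int.units_mul_self]
  rw [pairingTerm, pairingTerm, Perm.sign_mul, hsign, mul_one]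
  simp only [Perm.mul_apply, permutePairs_evenPos, permutePairs_oddPos]
  exact congrArg _ <| Equiv.prod_comp g fun t => A (σ (evenPos t)) (σ (oddPos t))

lemma pairingTerm_mul_swapWithinPairs {A : Matrix (Fin (2 * s)) (Fin (2 * s)) R}
    (hA : Aᵀ = -A) (σ : Perm (Fin (2 * s))) (d : Fin s → Perm (Fin 2)) :
    pairingTerm A (σ * swapWithinPairs d) = pairingTerm A σ := by
  set ε : Fin s → R := fun t => ((sign (d t) : ℤ) : R)
  have hfactor : ∀ t, A (σ (slot (t, d t 0))) (σ (slot (t, d t 1))) =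
      ε t * A (σ (slot (t, 0))) (σ (slot (t, 1))) := by
    intro t
    rcases perm_fin_two_eq_one_or_swap (d t) with h | h
    · simp [ε, h]
    · have hanti := congrFun (congrFun hA (σ (slot (t, 0)))) (σ (slot (t, 1)))
      rw [Matrix.transpose_apply, Matrix.neg_apply] at hanti
      simp [ε, h, hanti]
  have hsign : ((sign (swapWithinPairs d) : ℤ) : R) = ∏ t, ε t := by
    simp [ε, swapWithinPairs, sign_permCongr, sign_prodCongrRight]
  have hsq : (∏ t, ε t) * ∏ t, ε t = 1 := by
    rw [← Finset.prod_mul_distrib]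
    exact Finset.prod_eq_one fun t _ => by
      rw [← Int.cast_mul, ← Units.val_mul, Int.units_mul_self, Units.val_one, Int.cast_one]
  calc pairingTerm A (σ * swapWithinPairs d)
      = ((sign σ : ℤ) : R) * ((∏ t, ε t) * ∏ t, ε t) *
          ∏ t, A (σ (slot (t, 0))) (σ (slot (t, 1))) := by
        simp only [pairingTerm, Perm.mul_apply, evenPos, oddPos, swapWithinPairs_slot]
        rw [Perm.sign_mul, Units.val_mul, Int.cast_mul, hsign,
          Finset.prod_congr rfl fun t _ => hfactor t, Finset.prod_mul_distrib]
        ring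
    _ = pairingTerm A σ := by rw [hsq, mul_one, pairingTerm]; rfl

noncomputable def sortPairs (σ : Perm (Fin (2 * s))) : Perm (Fin s) :=
  Tuple.sort fun t => min (σ (evenPos t)) (σ (oddPos t))

noncomputable def orientPairs (σ : Perm (Fin (2 * s))) (t : Fin s) : Perm (Fin 2) :=
  if σ (oddPos (sortPairs σ t)) < σ (evenPos (sortPairs σ t)) then swap 0 1 else 1

noncomputable def canonicalize (σ : Perm (Fin (2 * s))) : Perm (Fin (2 * s)) :=
  σ * permutePairs (sortPairs σ) * swapWithinPairs (orientPairs σ)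

lemma canonicalize_apply_slot (σ : Perm (Fin (2 * s))) (t : Fin s) (i : Fin 2) :
    canonicalize σ (slot (t, i)) = σ (slot (sortPairs σ t, orientPairs σ t i)) := by
  simp [canonicalize]

lemma canonicalize_apply_evenPos (σ : Perm (Fin (2 * s))) (t : Fin s) :
    canonicalize σ (evenPos t) =
      min (σ (evenPos (sortPairs σ t))) (σ (oddPos (sortPairs σ t))) := by
  rw [evenPos, canonicalize_apply_slot, orientPairs]
  split_ifs with h
  · rw [min_eq_right h.le, swap_apply_left]; rfl
  · rw [min_eq_left (not_lt.1 h)]; rfl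

lemma canonicalize_apply_oddPos (σ : Perm (Fin (2 * s))) (t : Fin s) :
    canonicalize σ (oddPos t) =
      max (σ (evenPos (sortPairs σ t))) (σ (oddPos (sortPairs σ t))) := by
  rw [oddPos, canonicalize_apply_slot, orientPairs]
  split_ifs with h
  · rw [max_eq_left h.le, swap_apply_right]; rfl
  · rw [max_eq_right (not_lt.1 h)]; rfl

lemma min_pair_injective (σ : Perm (Fin (2 * s))) :
    Function.Injective fun t => min (σ (evenPos t)) (σ (oddPos t)) := by
  have hslot : ∀ t, ∃ i, min (σ (evenPos t)) (σ (oddPos t)) = σ (slot (t, i)) := fun t =>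
    (min_choice _ _).elim (fun h => ⟨0, h⟩) fun h => ⟨1, h⟩
  intro t u htu
  obtain ⟨i, hi⟩ := hslot t
  obtain ⟨j, hj⟩ := hslot u
  have := slot.injective (σ.injective (hi.symm.trans (htu.trans hj)))
  exact (Prod.ext_iff.1 this).1

lemma canonicalize_mem_pairings (σ : Perm (Fin (2 * s))) : canonicalize σ ∈ pairings s := by
  refine mem_pairings.2 ⟨fun t => ?_, ?_⟩
  · rw [canonicalize_apply_evenPos, canonicalize_apply_oddPos]
    exact min_lt_max.2 (σ.injective.ne (evenPos_ne_oddPos _ _))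
  · have hmono := Tuple.monotone_sort fun t => min (σ (evenPos t)) (σ (oddPos t))
    have hcomp : canonicalize σ ∘ evenPos =
        (fun t => min (σ (evenPos t)) (σ (oddPos t))) ∘ sortPairs σ :=
      funext (canonicalize_apply_evenPos σ)
    rw [hcomp]
    exact hmono.strictMono_of_injective ((min_pair_injective σ).comp (sortPairs σ).injective)

lemma partner_canonicalize (σ : Perm (Fin (2 * s))) : partner (canonicalize σ) = partner σ := by
  rw [canonicalize, partner_mul_of_commute (commute_swapWithinPairs_flipPairs _),
    partner_mul_of_commute (commute_permutePairs_flipPairs _)]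

lemma pairingTerm_canonicalize {A : Matrix (Fin (2 * s)) (Fin (2 * s)) R}
    (hA : Aᵀ = -A) (σ : Perm (Fin (2 * s))) : pairingTerm A (canonicalize σ) = pairingTerm A σ := by
  rw [canonicalize, pairingTerm_mul_swapWithinPairs hA, pairingTerm_mul_permutePairs]

lemma range_comp_evenPos {σ : Perm (Fin (2 * s))} (hσ : σ ∈ pairings s) :
    Set.range (σ ∘ evenPos) = {x | x < partner σ x} := by
  ext x
  constructor
  · rintro ⟨t, rfl⟩
    simpa [partner_apply_evenPos] using (mem_pairings.1 hσ).1 t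
  · intro hx
    obtain ⟨y, rfl⟩ := σ.surjective x
    obtain ⟨t, rfl⟩ | ⟨t, rfl⟩ := exists_eq_evenPos_or_oddPos y
    · exact ⟨t, rfl⟩
    · rw [Set.mem_ofPred_eq, partner_apply_oddPos] at hx
      exact absurd hx (lt_asymm ((mem_pairings.1 hσ).1 t))

lemma eq_of_partner_eq {σ τ : Perm (Fin (2 * s))} (hσ : σ ∈ pairings s) (hτ : τ ∈ pairings s)
    (h : partner σ = partner τ) : σ = τ := by
  have heven : σ ∘ evenPos = τ ∘ evenPos := by
    rw [← (mem_pairings.1 hσ).2.range_inj (mem_pairings.1 hτ).2, range_comp_evenPos hσ,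
      range_comp_evenPos hτ, h]
  have hodd : ∀ t, σ (oddPos t) = τ (oddPos t) := fun t => by
    rw [← partner_apply_evenPos, ← partner_apply_evenPos, h,
      show σ (evenPos t) = τ (evenPos t) from congrFun heven t]
  ext1 x
  obtain ⟨t, rfl⟩ | ⟨t, rfl⟩ := exists_eq_evenPos_or_oddPos x
  exacts [congrFun heven t, hodd t]

def IsBipartite (σ : Perm (Fin (2 * s))) : Prop :=
  ∀ x, (partner σ x).val % 2 ≠ x.val % 2

lemma isBipartite_canonicalize_iff {σ : Perm (Fin (2 * s))} :
    IsBipartite (canonicalize σ) ↔ IsBipartite σ := by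
  simp only [IsBipartite, partner_canonicalize]

lemma pairingTerm_eq_zero_of_not_isBipartite {A : Matrix (Fin (2 * s)) (Fin (2 * s)) R}
    (h0 : ∀ i j : Fin (2 * s), i.1 % 2 = j.1 % 2 → A i j = 0) {σ : Perm (Fin (2 * s))}
    (hσ : ¬ IsBipartite σ) : pairingTerm A σ = 0 := by
  obtain ⟨x, hx⟩ := not_forall.1 hσ
  rw [not_not] at hx
  obtain ⟨y, rfl⟩ := σ.surjective x
  have hzero : ∃ t, A (σ (evenPos t)) (σ (oddPos t)) = 0 := by
    obtain ⟨t, rfl⟩ | ⟨t, rfl⟩ := exists_eq_evenPos_or_oddPos y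
    · rw [partner_apply_evenPos] at hx
      exact ⟨t, h0 _ _ hx.symm⟩
    · rw [partner_apply_oddPos] at hx
      exact ⟨t, h0 _ _ hx⟩
  obtain ⟨t, ht⟩ := hzero
  rw [pairingTerm, Finset.prod_eq_zero (Finset.mem_univ t) ht, mul_zero]

lemma partner_eq_of_forall_evenPos {σ τ : Perm (Fin (2 * s))} (hσ : IsBipartite σ)
    (h : ∀ t, partner τ (evenPos t) = partner σ (evenPos t)) : partner τ = partner σ := by
  ext1 x
  obtain ⟨t, rfl⟩ | ⟨t, rfl⟩ := exists_eq_evenPos_or_oddPos x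
  · exact h t
  obtain ⟨u, hu⟩ | ⟨u, hu⟩ := exists_eq_evenPos_or_oddPos (partner σ (oddPos t))
  · have hτ : partner τ (evenPos u) = oddPos t := by rw [h u, ← hu, partner_partner]
    rw [← hτ, partner_partner, hτ, hu]
  · refine absurd (hσ (oddPos t)) ?_
    rw [hu, val_oddPos, val_oddPos, not_not]
    omega

/-- The pairing `{2t, 2π(t)+1}`, not in canonical form. -/
def pairingOfPerm (π : Perm (Fin s)) : Perm (Fin (2 * s)) :=
  slot.permCongr (prodCongrLeft ![1, π])

lemma pairingOfPerm_evenPos (π : Perm (Fin s)) (t : Fin s) :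
    pairingOfPerm π (evenPos t) = evenPos t := by
  simp [pairingOfPerm, evenPos, permCongr_apply]

lemma pairingOfPerm_oddPos (π : Perm (Fin s)) (t : Fin s) :
    pairingOfPerm π (oddPos t) = oddPos (π t) := by
  simp [pairingOfPerm, oddPos, permCongr_apply]

lemma partner_pairingOfPerm_evenPos (π : Perm (Fin s)) (t : Fin s) :
    partner (pairingOfPerm π) (evenPos t) = oddPos (π t) := by
  conv_lhs => rw [← pairingOfPerm_evenPos π t]
  rw [partner_apply_evenPos, pairingOfPerm_oddPos]

lemma isBipartite_pairingOfPerm (π : Perm (Fin s)) : IsBipartite (pairingOfPerm π) := by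
  intro x
  obtain ⟨y, rfl⟩ := (pairingOfPerm π).surjective x
  obtain ⟨t, rfl⟩ | ⟨t, rfl⟩ := exists_eq_evenPos_or_oddPos y
  · rw [partner_apply_evenPos, pairingOfPerm_evenPos, pairingOfPerm_oddPos]
    simp only [val_evenPos, val_oddPos]
    omega
  · rw [partner_apply_oddPos, pairingOfPerm_evenPos, pairingOfPerm_oddPos]
    simp only [val_evenPos, val_oddPos]
    omega

lemma pairingTerm_pairingOfPerm (A : Matrix (Fin (2 * s)) (Fin (2 * s)) R) (π : Perm (Fin s)) :
    pairingTerm A (pairingOfPerm π) = ((sign π : ℤ) : R) * ∏ t, A (evenPos t) (oddPos (π t)) := by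
  have hsign : sign (pairingOfPerm π) = sign π := by
    simp [pairingOfPerm, sign_permCongr, sign_prodCongrLeft, Fin.prod_univ_two]
  simp only [pairingTerm, hsign, pairingOfPerm_evenPos, pairingOfPerm_oddPos]

lemma canonicalize_pairingOfPerm_injective :
    Function.Injective fun π : Perm (Fin s) => canonicalize (pairingOfPerm π) := by
  intro π ρ h
  have hpartner := congrArg partner h
  simp only [partner_canonicalize] at hpartner
  ext1 t
  apply oddPos_injective
  rw [← partner_pairingOfPerm_evenPos, ← partner_pairingOfPerm_evenPos, hpartner]

lemma exists_canonicalize_pairingOfPerm_eq {σ : Perm (Fin (2 * s))} (hσ : σ ∈ pairings s)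
    (hb : IsBipartite σ) : ∃ π, canonicalize (pairingOfPerm π) = σ := by
  have hodd : ∀ t, ∃ u, partner σ (evenPos t) = oddPos u := fun t =>
    (exists_eq_evenPos_or_oddPos _).resolve_left fun ⟨u, hu⟩ =>
      hb (evenPos t) (by rw [hu, val_evenPos, val_evenPos]; omega)
  choose f hf using hodd
  have hinj : Function.Injective f := fun t u htu =>
    evenPos_injective ((partner σ).injective (by rw [hf, hf, htu]))
  refine ⟨Equiv.ofBijective f hinj.bijective_of_finite,
    eq_of_partner_eq (canonicalize_mem_pairings _) hσ ?_⟩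
  rw [partner_canonicalize]
  exact partner_eq_of_forall_evenPos hb fun t => by
    rw [partner_pairingOfPerm_evenPos, Equiv.ofBijective_apply, hf]

end Pfaffian

open Pfaffian in
/-- if an antisymmetric `2s × 2s` matrix vanishes on pairs of indices of the same
parity, its Pfaffian is the determinant of the `s × s` matrix of its odd-row/even-column
entries (1-indexed), i.e. `B t u = A (2t) (2u+1)` with 0-indexing. -/
theorem stmt16 {R : Type*} [CommRing R] (s : ℕ) (A : Matrix (Fin (2 * s)) (Fin (2 * s)) R)
    (hA : Aᵀ = -A) (h0 : ∀ i j : Fin (2 * s), i.1 % 2 = j.1 % 2 → A i j = 0) :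
    pf s A = Matrix.det (Matrix.of fun t u : Fin s =>
      A ⟨2 * t.1, by have := t.2; omega⟩ ⟨2 * u.1 + 1, by have := u.2; omega⟩) := by
  rw [pf_eq_sum_pairingTerm, ← Finset.sum_filter_of_ne fun σ _ hσ =>
    by_contra fun hb => hσ (pairingTerm_eq_zero_of_not_isBipartite h0 hb), ← det_transpose,
    det_apply']
  symm
  refine Finset.sum_nbij (fun π => canonicalize (pairingOfPerm π)) (fun π _ => ?_)
    canonicalize_pairingOfPerm_injective.injOn (fun σ hσ => ?_) (fun π _ => ?_)
  · exact Finset.mem_filter.2 ⟨canonicalize_mem_pairings _,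
      isBipartite_canonicalize_iff.2 (isBipartite_pairingOfPerm π)⟩
  · obtain ⟨hmem, hb⟩ := Finset.mem_filter.1 hσ
    obtain ⟨π, rfl⟩ := exists_canonicalize_pairingOfPerm_eq hmem hb
    exact ⟨π, Finset.mem_coe.2 (Finset.mem_univ π), rfl⟩
  · rw [pairingTerm_canonicalize hA, pairingTerm_pairingOfPerm]
    rfl
end
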